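/- arXiv:1510.05178 — 3 statements merged into one kernel-verified Lean document; each statement's English description precedes it below -/
import Mathlib

section
/- Let G be a simple graph on the vertex set Fin N (N ≥ 2) with arbitrary real edge weights w, and let n be a composition of N with K ≥ 2 parts. Then every eigenvalue of the weighted graph Laplacian L_G(w) is an eigenvalue of the Schreier Laplacian L_n(w). -/
/-!
For a colour `k`, the fibre indicator `P_k v (f) = ∑_{f a = k} v a` intertwines the graph
Laplacian with the Schreier Laplacian: moving along the edge `{i, j}` changes `P_k v` by
`(1_{f i = k} - 1_{f j = k}) (v i - v j)`, and summing this over the edges (with `w` symmetric)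
gives `P_k (L_G v)`. When `k` and some other colour both occur, `P_k` is injective: a vector in
its kernel agrees on any two vertices that some colouring separates, so it is a constant `c`,
and then `P_k v = n_k c` forces `c = 0`. Hence `P_k` maps eigenvectors of `L_G` to eigenvectors
of `L_n`.
-/

open Matrix Finset

attribute [local instance] Classical.propDecidable

noncomputable def graphLap (N : ℕ) (G : SimpleGraph (Fin N)) (w : Fin N → Fin N → ℝ) :
    Matrix (Fin N) (Fin N) ℝ :=
  Matrix.of fun i j =>
    if i = j then ∑ k, (if G.Adj i k then w i k else 0)
    else if G.Adj i j then -w i j else 0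

abbrev Vcomp (N K : ℕ) (n : Fin K → ℕ) : Type :=
  {f : Fin N → Fin K // ∀ k, (Finset.univ.filter fun i => f i = k).card = n k}

noncomputable def schLap (N K : ℕ) (G : SimpleGraph (Fin N)) (n : Fin K → ℕ)
    (w : Fin N → Fin N → ℝ) : Matrix (Vcomp N K n) (Vcomp N K n) ℝ :=
  Matrix.of fun f g => ∑ i, ∑ j,
    if i < j ∧ G.Adj i j then
      w i j * ((if g = f then 1 else 0) -
        (if (g : Fin N → Fin K) = (f : Fin N → Fin K) ∘ (Equiv.swap i j) then 1 else 0))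
    else 0

theorem Matrix.mem_spectrum_of_mulVec_intertwine {R ι κ : Type*} [Field R]
    [Fintype ι] [DecidableEq ι] [Fintype κ] [DecidableEq κ]
    {A : Matrix ι ι R} {B : Matrix κ κ R} (P : Matrix ι κ R)
    (hP : ∀ v, P *ᵥ v = 0 → v = 0) (hAP : ∀ v, A *ᵥ (P *ᵥ v) = P *ᵥ (B *ᵥ v)) {μ : R}
    (hμ : μ ∈ spectrum R B) : μ ∈ spectrum R A := by
  rw [← spectrum_toLin', ← Module.End.hasEigenvalue_iff_mem_spectrum] at hμ ⊢
  obtain ⟨v, hv, hv0⟩ := hμ.exists_hasEigenvector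
  rw [Module.End.mem_eigenspace_iff, toLin'_apply] at hv
  refine Module.End.hasEigenvalue_of_hasEigenvector (x := P *ᵥ v) ⟨?_, fun h => hv0 (hP v h)⟩
  rw [Module.End.mem_eigenspace_iff, toLin'_apply, hAP, hv, mulVec_smul]

theorem Fintype.sum_mul_sub_sum_comp_swap_mul {α R : Type*} [Fintype α] [DecidableEq α]
    [CommRing R] (c v : α → R) {i j : α} (hij : i ≠ j) :
    ∑ a, c a * v a - ∑ a, c (Equiv.swap i j a) * v a = (c i - c j) * (v i - v j) := by
  rw [← Finset.sum_sub_distrib, Fintype.sum_eq_add i j hij, Equiv.swap_apply_left,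
    Equiv.swap_apply_right]
  · ring
  · rintro a ⟨hai, haj⟩
    rw [Equiv.swap_apply_of_ne_of_ne hai haj, sub_self]

theorem Fintype.sum_sum_ite_lt_add {α M : Type*} [Fintype α] [LinearOrder α] [DecidableLT α]
    [AddCommMonoid M] (F : α → α → M) (hF : ∀ i, F i i = 0) :
    ∑ i, ∑ j, (if i < j then F i j + F j i else 0) = ∑ i, ∑ j, F i j := by
  have hsplit : ∀ i j, (if i < j then F i j + F j i else 0)
      = (if i < j then F i j else 0) + (if i < j then F j i else 0) := by
    intro i j; split_ifs <;> simp
  simp_rw [hsplit, Finset.sum_add_distrib]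
  rw [Finset.sum_comm (f := fun i j => if i < j then F j i else 0), ← Finset.sum_add_distrib]
  refine Finset.sum_congr rfl fun i _ => ?_
  rw [← Finset.sum_add_distrib]
  refine Finset.sum_congr rfl fun j _ => ?_
  rcases lt_trichotomy i j with h | rfl | h
  · simp [h, h.not_gt]
  · simp [hF]
  · simp [h, h.not_gt]

theorem Finset.card_filter_sigma_fst_eq {ι : Type*} [Fintype ι] [DecidableEq ι] {α : ι → Type*}
    [∀ i, Fintype (α i)] (k : ι) : #{s : Σ i, α i | s.1 = k} = Fintype.card (α k) := by
  have hfiber : ({s : Σ i, α i | s.1 = k} : Finset _)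
      = univ.map (Function.Embedding.sigmaMk k) := by
    ext ⟨k', a⟩
    simp only [mem_filter, mem_univ, true_and, mem_map, Function.Embedding.sigmaMk_apply,
      Sigma.mk.injEq]
    constructor
    · rintro rfl; exact ⟨a, rfl, HEq.rfl⟩
    · rintro ⟨b, rfl, -⟩; rfl
  rw [hfiber, card_map, card_univ]

theorem Finset.card_filter_comp_perm {α β : Type*} [Fintype α] [DecidableEq β] (f : α → β)
    (σ : Equiv.Perm α) (k : β) : #{i | f (σ i) = k} = #{i | f i = k} :=
  Finset.card_equiv σ (by simp)

namespace Vcomp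

variable {N K : ℕ} {n : Fin K → ℕ}

def permute (f : Vcomp N K n) (σ : Equiv.Perm (Fin N)) : Vcomp N K n :=
  ⟨f.1 ∘ σ, fun k => (Finset.card_filter_comp_perm f.1 σ k).trans (f.2 k)⟩

@[simp]
theorem permute_apply (f : Vcomp N K n) (σ : Equiv.Perm (Fin N)) (i : Fin N) :
    (f.permute σ).1 i = f.1 (σ i) := rfl

theorem nonempty (hsum : ∑ k, n k = N) : Nonempty (Vcomp N K n) := by
  subst hsum
  refine ⟨⟨fun i => (finSigmaFinEquiv.symm i).1, fun k => ?_⟩⟩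
  rw [Finset.card_equiv finSigmaFinEquiv.symm (t := {s | s.1 = k}) (by simp),
    Finset.card_filter_sigma_fst_eq, Fintype.card_fin]

theorem exists_apply_eq_of_pos (f : Vcomp N K n) {k : Fin K} (hk : 0 < n k) :
    ∃ i, f.1 i = k := by
  rw [← f.2 k, Finset.card_pos] at hk
  simpa [Finset.Nonempty] using hk

noncomputable def fiberIndicator (k : Fin K) : Matrix (Vcomp N K n) (Fin N) ℝ :=
  Matrix.of fun f a => if f.1 a = k then 1 else 0

theorem fiberIndicator_mulVec_apply (k : Fin K) (v : Fin N → ℝ) (f : Vcomp N K n) :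
    (fiberIndicator k *ᵥ v) f = ∑ a, (if f.1 a = k then 1 else 0) * v a :=
  rfl

theorem fiberIndicator_mulVec_sub_permute_swap (k : Fin K) (v : Fin N → ℝ) (f : Vcomp N K n)
    {i j : Fin N} (hij : i ≠ j) :
    (fiberIndicator k *ᵥ v) f - (fiberIndicator k *ᵥ v) (f.permute (Equiv.swap i j))
      = ((if f.1 i = k then 1 else 0) - (if f.1 j = k then 1 else 0)) * (v i - v j) :=
  Fintype.sum_mul_sub_sum_comp_swap_mul (fun a => if f.1 a = k then 1 else 0) v hij

theorem eq_of_fiberIndicator_mulVec_eq_zero {v : Fin N → ℝ} {k : Fin K}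
    (hv : fiberIndicator (n := n) k *ᵥ v = 0) (f : Vcomp N K n) {i j : Fin N} (hi : f.1 i = k)
    (hj : f.1 j ≠ k) : v i = v j := by
  have hij : i ≠ j := by rintro rfl; exact hj hi
  have h := fiberIndicator_mulVec_sub_permute_swap k v f hij
  rw [hv, if_pos hi, if_neg hj] at h
  simpa [sub_eq_zero, eq_comm] using h

theorem eq_zero_of_fiberIndicator_mulVec_eq_zero [Nonempty (Vcomp N K n)] {k k' : Fin K}
    (hkk' : k ≠ k') (hk : 0 < n k) (hk' : 0 < n k') {v : Fin N → ℝ}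
    (hv : fiberIndicator (n := n) k *ᵥ v = 0) : v = 0 := by
  obtain ⟨f₀⟩ := ‹Nonempty (Vcomp N K n)›
  obtain ⟨i₀, hi₀⟩ := f₀.exists_apply_eq_of_pos hk
  obtain ⟨j₀, hj₀⟩ := f₀.exists_apply_eq_of_pos hk'
  have hj₀k : f₀.1 j₀ ≠ k := hj₀ ▸ hkk'.symm
  have hconst : ∀ a, v a = v j₀ := by
    intro a
    by_cases ha : f₀.1 a = k
    · exact eq_of_fiberIndicator_mulVec_eq_zero hv f₀ ha hj₀k
    by_cases haj : a = j₀
    · rw [haj]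
    have hj₀i₀ : j₀ ≠ i₀ := by rintro rfl; exact hj₀k hi₀
    refine eq_of_fiberIndicator_mulVec_eq_zero hv (f₀.permute (Equiv.swap i₀ a)) ?_ ?_
    · simpa using hi₀
    · rwa [permute_apply, Equiv.swap_apply_of_ne_of_ne hj₀i₀ (Ne.symm haj)]
  have hf₀ : (fiberIndicator k *ᵥ v) f₀ = n k * v j₀ := by
    simp_rw [fiberIndicator_mulVec_apply, hconst, ← Finset.sum_mul, Finset.sum_boole, f₀.2 k]
  have hvj₀ : v j₀ = 0 := by
    have h := congrFun hv f₀
    rw [hf₀, Pi.zero_apply, mul_eq_zero] at h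
    exact h.resolve_left (by positivity)
  funext a
  rw [hconst a, hvj₀, Pi.zero_apply]

end Vcomp

theorem graphLap_mulVec_apply (N : ℕ) (G : SimpleGraph (Fin N)) (w : Fin N → Fin N → ℝ)
    (v : Fin N → ℝ) (i : Fin N) :
    (graphLap N G w *ᵥ v) i = ∑ j, if G.Adj i j then w i j * (v i - v j) else 0 := by
  have hentry : ∀ j, graphLap N G w i j
      = (if i = j then ∑ k, (if G.Adj i k then w i k else 0) else 0)
        - if G.Adj i j then w i j else 0 := by
    intro j
    by_cases h : i = j
    · subst h; simp [graphLap]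
    · simp only [graphLap, of_apply, if_neg h]
      split_ifs <;> simp
  simp_rw [mulVec, dotProduct, hentry, sub_mul, Finset.sum_sub_distrib, ite_mul, zero_mul,
    Finset.sum_ite_eq, if_pos (Finset.mem_univ i), Finset.sum_mul, ← Finset.sum_sub_distrib]
  refine Finset.sum_congr rfl fun j _ => ?_
  split_ifs <;> ring

theorem schLap_mulVec_apply (N K : ℕ) (G : SimpleGraph (Fin N)) (n : Fin K → ℕ)
    (w : Fin N → Fin N → ℝ) (x : Vcomp N K n → ℝ) (f : Vcomp N K n) :
    (schLap N K G n w *ᵥ x) f = ∑ i, ∑ j,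
      if i < j ∧ G.Adj i j then w i j * (x f - x (f.permute (Equiv.swap i j))) else 0 := by
  simp only [schLap, mulVec, dotProduct, of_apply, Finset.sum_mul]
  rw [Finset.sum_comm]
  refine Finset.sum_congr rfl fun i _ => ?_
  rw [Finset.sum_comm]
  refine Finset.sum_congr rfl fun j _ => ?_
  split_ifs with h
  · have hcond : ∀ g : Vcomp N K n,
        g.1 = f.1 ∘ Equiv.swap i j ↔ g = f.permute (Equiv.swap i j) :=
      fun g => by rw [Subtype.ext_iff]; rfl
    simp [hcond, mul_sub, sub_mul, Finset.sum_sub_distrib, ite_mul]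
  · simp

open Vcomp in
theorem schLap_mulVec_fiberIndicator_mulVec (N K : ℕ) (G : SimpleGraph (Fin N)) (n : Fin K → ℕ)
    (w : Fin N → Fin N → ℝ) (hsym : ∀ i j, w i j = w j i) (k : Fin K) (v : Fin N → ℝ) :
    schLap N K G n w *ᵥ (fiberIndicator k *ᵥ v)
      = fiberIndicator k *ᵥ (graphLap N G w *ᵥ v) := by
  funext f
  set c : Fin N → ℝ := fun a => if f.1 a = k then 1 else 0
  set F : Fin N → Fin N → ℝ := fun i j => if G.Adj i j then c i * (w i j * (v i - v j)) else 0
  calc (schLap N K G n w *ᵥ (fiberIndicator k *ᵥ v)) f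
      = ∑ i, ∑ j, if i < j then F i j + F j i else 0 := by
        rw [schLap_mulVec_apply]
        refine Finset.sum_congr rfl fun i _ => Finset.sum_congr rfl fun j _ => ?_
        by_cases hij : i < j
        · rw [fiberIndicator_mulVec_sub_permute_swap k v f hij.ne]
          by_cases hadj : G.Adj i j
          · simp only [F, hij, hadj, hadj.symm, hsym j i, and_self, if_true]
            ring
          · have hadj' : ¬G.Adj j i := fun h => hadj h.symm
            simp [F, hij, hadj, hadj']
        · simp [hij]
    _ = ∑ i, ∑ j, F i j := Fintype.sum_sum_ite_lt_add F (fun i => by simp [F])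
    _ = (fiberIndicator k *ᵥ (graphLap N G w *ᵥ v)) f := by
        simp_rw [fiberIndicator_mulVec_apply, graphLap_mulVec_apply, Finset.mul_sum, mul_ite,
          mul_zero, F, c]

theorem graphLap_spectrum_subset_schLap_spectrum_general (N K : ℕ) (hK : 2 ≤ K)
    (G : SimpleGraph (Fin N))
    (w : Fin N → Fin N → ℝ) (hsym : ∀ i j, w i j = w j i)
    (n : Fin K → ℕ) (hparts : ∀ k, 0 < n k) (hsum : ∑ k, n k = N) :
    ∀ μ : ℝ, μ ∈ spectrum ℝ (graphLap N G w) → μ ∈ spectrum ℝ (schLap N K G n w) := by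
  have := Vcomp.nonempty (K := K) (n := n) hsum
  let k₀ : Fin K := ⟨0, by omega⟩
  let k₁ : Fin K := ⟨1, by omega⟩
  have hk₀₁ : k₀ ≠ k₁ := by simp [k₀, k₁, Fin.ext_iff]
  intro μ
  exact Matrix.mem_spectrum_of_mulVec_intertwine (Vcomp.fiberIndicator k₀)
    (fun _ => Vcomp.eq_zero_of_fiberIndicator_mulVec_eq_zero hk₀₁ (hparts k₀) (hparts k₁))
    (schLap_mulVec_fiberIndicator_mulVec N K G n w hsym k₀)

/-- Every eigenvalue of the weighted graph Laplacian is an eigenvalue of the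
Schreier Laplacian, for any composition of `N` with at least two parts. -/
theorem graphLap_spectrum_subset_schLap_spectrum (N K : ℕ) (hN : 2 ≤ N) (hK : 2 ≤ K)
    (G : SimpleGraph (Fin N))
    (w : Fin N → Fin N → ℝ) (hsym : ∀ i j, w i j = w j i)
    (n : Fin K → ℕ) (hparts : ∀ k, 0 < n k) (hsum : ∑ k, n k = N) :
    ∀ μ : ℝ, μ ∈ spectrum ℝ (graphLap N G w) → μ ∈ spectrum ℝ (schLap N K G n w) :=
  graphLap_spectrum_subset_schLap_spectrum_general N K hK G w hsym n hparts hsum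
end

section
/- Let G be a simple graph on the vertex set Fin N (N ≥ 2) with real edge weights w and total weight W = Σ_{{i,j} ∈ E} w_{ij}, and let D be the diagonal N!×N! matrix indexed by S_N with D_{σσ} = sgn(σ). Then D · L_reg(w) · D = 2W·I − L_reg(w). Consequently, for every real λ and every m, λ is an eigenvalue of the interchange Laplacian L_reg(w) with multiplicity m if and only if 2W − λ is an eigenvalue of L_reg(w) with multiplicity m; i.e., the spectrum of the interchange Laplacian is symmetric about W. -/
/-!
Write `L = W·I − ∑_{ij ∈ E} w_ij P_ij`, where `P_ij` is the permutation matrix of right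
multiplication by the transposition `(i j)`. Since `sgn(σ (i j)) = −sgn σ`, conjugating by the
sign matrix `D` negates every `P_ij` and fixes `I`, so `D L D = W·I + ∑ w_ij P_ij = 2W·I − L`.
As `D² = I`, `L` and `2W·I − L` have the same characteristic polynomial, and for symmetric `L`
the roots of the latter are the `2W − λ`, hence the eigenvalue multiset of `L` is invariant
under `λ ↦ 2W − λ`.
-/

open Matrix Finset

attribute [local instance] Classical.propDecidable

/-- Total weight of a weighted graph on `Fin N`. -/
noncomputable def totalW (N : ℕ) (G : SimpleGraph (Fin N)) (w : Fin N → Fin N → ℝ) : ℝ :=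
  ∑ i, ∑ j, if i < j ∧ G.Adj i j then w i j else 0

/-- The interchange Laplacian `L_reg(w)`, indexed by the symmetric group on `Fin N`. -/
noncomputable def interLap (N : ℕ) (G : SimpleGraph (Fin N)) (w : Fin N → Fin N → ℝ) :
    Matrix (Equiv.Perm (Fin N)) (Equiv.Perm (Fin N)) ℝ :=
  Matrix.of fun σ π => ∑ i, ∑ j,
    if i < j ∧ G.Adj i j then
      w i j * ((if π = σ then 1 else 0) - (if π = σ * Equiv.swap i j then 1 else 0))
    else 0

/-- Multiset of eigenvalues (with multiplicity) of a real symmetric matrix. -/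
noncomputable def eigs {m : Type*} [Fintype m] [DecidableEq m] (M : Matrix m m ℝ) : Multiset ℝ :=
  if h : M.IsHermitian then Finset.univ.val.map h.eigenvalues else 0

open Equiv Equiv.Perm Polynomial

lemma intCast_sign_mul_self {α R : Type*} [Fintype α] [DecidableEq α] [Ring R] (σ : Perm α) :
    ((sign σ : ℤ) : R) * ((sign σ : ℤ) : R) = 1 := by
  rw [← Int.cast_mul, ← Units.val_mul, Int.units_mul_self, Units.val_one, Int.cast_one]

lemma diagonal_mul_permMatrix_mul_diagonal {α R : Type*} [Fintype α] [DecidableEq α] [CommRing R]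
    (e : Perm α) (d : α → R) (h : ∀ a, d a * d (e a) = -1) :
    diagonal d * e.permMatrix R * diagonal d = -e.permMatrix R := by
  ext a b
  simp only [mul_diagonal, diagonal_mul, PEquiv.toMatrix_apply, toPEquiv_apply,
    Option.mem_def, Option.some.injEq, Matrix.neg_apply]
  split_ifs with hab
  · subst hab; rw [mul_one, h]
  · simp

section Spectrum

variable {m : Type*} [Fintype m] [DecidableEq m]

lemma charpoly_mul_mul_of_mul_eq_one {R : Type*} [CommRing R] {A B : Matrix m m R}
    (h : B * A = 1) (M : Matrix m m R) : (A * M * B).charpoly = M.charpoly := by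
  rw [charpoly_mul_comm, ← Matrix.mul_assoc, h, Matrix.one_mul]

lemma eigs_eq_roots_charpoly {M : Matrix m m ℝ} (hM : M.IsHermitian) :
    eigs M = M.charpoly.roots := by
  rw [eigs, dif_pos hM, hM.roots_charpoly_eq_eigenvalues]
  rfl

lemma roots_charpoly_smul_one_sub {M : Matrix m m ℝ} (hM : M.IsHermitian) (c : ℝ) :
    (c • 1 - M).charpoly.roots = (eigs M).map (c - ·) := by
  set U := hM.eigenvectorUnitary
  have hdiag : diagonal (fun i => c - hM.eigenvalues i) = c • 1 - diagonal hM.eigenvalues := by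
    ext i j
    by_cases hij : i = j
    · subst hij; simp
    · simp [hij]
  have hspec :
      c • 1 - M = Unitary.conjStarAlgAut ℝ _ U (diagonal fun i => c - hM.eigenvalues i) := by
    conv_lhs => rw [hM.spectral_theorem]
    rw [hdiag, map_sub, map_smul, map_one]
    rfl
  rw [hspec, Unitary.conjStarAlgAut_apply,
    charpoly_mul_mul_of_mul_eq_one (Unitary.coe_star_mul_self U), charpoly_diagonal,
    roots_prod _ _ (prod_ne_zero_iff.mpr fun i _ => X_sub_C_ne_zero _),
    eigs, dif_pos hM, Multiset.map_map]
  simp only [roots_X_sub_C, Multiset.bind_singleton]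
  rfl

end Spectrum

/-- `∑_{ij ∈ E} w_ij P_ij`, with `P_ij` the permutation matrix of `σ ↦ σ * (i j)`. -/
noncomputable def swapSum (N : ℕ) (G : SimpleGraph (Fin N)) (w : Fin N → Fin N → ℝ) :
    Matrix (Perm (Fin N)) (Perm (Fin N)) ℝ :=
  ∑ i, ∑ j,
    if i < j ∧ G.Adj i j then w i j • (Equiv.mulRight (swap i j)).permMatrix ℝ else 0

lemma interLap_eq_smul_one_sub_swapSum (N : ℕ) (G : SimpleGraph (Fin N))
    (w : Fin N → Fin N → ℝ) :
    interLap N G w = totalW N G w • 1 - swapSum N G w := by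
  ext σ π
  simp only [interLap, totalW, swapSum, of_apply, Matrix.sub_apply, Matrix.smul_apply,
    Matrix.sum_apply, Matrix.one_apply, smul_eq_mul, Finset.sum_mul, ← Finset.sum_sub_distrib]
  refine Finset.sum_congr rfl fun i _ => Finset.sum_congr rfl fun j _ => ?_
  by_cases hc : i < j ∧ G.Adj i j
  · simp only [if_pos hc, Matrix.smul_apply, smul_eq_mul, PEquiv.toMatrix_apply,
      toPEquiv_apply, Option.mem_def, Option.some.injEq, coe_mulRight, @eq_comm _ σ π,
      @eq_comm _ (σ * swap i j) π]
    split_ifs <;> ring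
  · simp [if_neg hc]

lemma swapSum_isHermitian (N : ℕ) (G : SimpleGraph (Fin N)) (w : Fin N → Fin N → ℝ) :
    (swapSum N G w).IsHermitian := by
  apply IsSelfAdjoint.isHermitian
  refine isSelfAdjoint_sum _ fun i _ => isSelfAdjoint_sum _ fun j _ => ?_
  split_ifs
  · refine IsHermitian.smul ?_ (IsSelfAdjoint.all _)
    simp [IsHermitian, Perm.inv_def]
  · exact isHermitian_zero

lemma sign_conj_swapSum (N : ℕ) (G : SimpleGraph (Fin N)) (w : Fin N → Fin N → ℝ) :
    diagonal (fun σ : Perm (Fin N) => ((sign σ : ℤ) : ℝ)) * swapSum N G w *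
      diagonal (fun σ : Perm (Fin N) => ((sign σ : ℤ) : ℝ)) = -swapSum N G w := by
  simp only [swapSum, Finset.mul_sum, Finset.sum_mul, ← Finset.sum_neg_distrib]
  refine Finset.sum_congr rfl fun i _ => Finset.sum_congr rfl fun j _ => ?_
  split_ifs with h
  · rw [Matrix.mul_smul, Matrix.smul_mul, diagonal_mul_permMatrix_mul_diagonal, smul_neg]
    intro σ
    simp [sign_swap h.1.ne, intCast_sign_mul_self]
  · simp

theorem interLap_sign_conjugation_and_spectrum_symmetry_general (N : ℕ)
    (G : SimpleGraph (Fin N))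
    (w : Fin N → Fin N → ℝ) :
    (Matrix.diagonal (fun σ : Equiv.Perm (Fin N) => ((Equiv.Perm.sign σ : ℤ) : ℝ)) *
        interLap N G w *
        Matrix.diagonal (fun σ : Equiv.Perm (Fin N) => ((Equiv.Perm.sign σ : ℤ) : ℝ)) =
      (2 * totalW N G w) • (1 : Matrix (Equiv.Perm (Fin N)) (Equiv.Perm (Fin N)) ℝ) -
        interLap N G w) ∧
    ∀ (lam : ℝ) (m : ℕ),
      Multiset.count lam (eigs (interLap N G w)) = m ↔
        Multiset.count (2 * totalW N G w - lam) (eigs (interLap N G w)) = m := by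
  have hL_eq := interLap_eq_smul_one_sub_swapSum N G w
  set D := diagonal fun σ : Perm (Fin N) => ((sign σ : ℤ) : ℝ)
  set L := interLap N G w
  set W := totalW N G w
  have hDD : D * D = 1 := by
    simp only [D, diagonal_mul_diagonal, intCast_sign_mul_self, diagonal_one]
  have hconj : D * L * D = (2 * W) • 1 - L := by
    rw [hL_eq, Matrix.mul_sub, Matrix.sub_mul, Matrix.mul_smul, Matrix.mul_one,
      Matrix.smul_mul, hDD, sign_conj_swapSum]
    module
  have hL : L.IsHermitian := by
    rw [hL_eq]
    exact (isHermitian_one.smul (IsSelfAdjoint.all _)).sub (swapSum_isHermitian N G w)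
  have heigs : eigs L = (eigs L).map (2 * W - ·) :=
    calc eigs L = (D * L * D).charpoly.roots := by
          rw [charpoly_mul_mul_of_mul_eq_one hDD, eigs_eq_roots_charpoly hL]
      _ = (eigs L).map (2 * W - ·) := by rw [hconj, roots_charpoly_smul_one_sub hL]
  refine ⟨hconj, fun lam m => ?_⟩
  have hcount : (eigs L).count (2 * W - lam) = (eigs L).count lam := by
    conv_lhs => rw [heigs]
    exact Multiset.count_map_eq_count' _ _ sub_right_injective lam
  rw [hcount]

/-- Conjugating the interchange Laplacian by the diagonal sign matrix gives
`2W·I − L_reg(w)`; consequently its spectrum is symmetric about `W`,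
multiplicities included. -/
theorem interLap_sign_conjugation_and_spectrum_symmetry (N : ℕ) (hN : 2 ≤ N)
    (G : SimpleGraph (Fin N))
    (w : Fin N → Fin N → ℝ) (hsym : ∀ i j, w i j = w j i) :
    (Matrix.diagonal (fun σ : Equiv.Perm (Fin N) => ((Equiv.Perm.sign σ : ℤ) : ℝ)) *
        interLap N G w *
        Matrix.diagonal (fun σ : Equiv.Perm (Fin N) => ((Equiv.Perm.sign σ : ℤ) : ℝ)) =
      (2 * totalW N G w) • (1 : Matrix (Equiv.Perm (Fin N)) (Equiv.Perm (Fin N)) ℝ) -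
        interLap N G w) ∧
    ∀ (lam : ℝ) (m : ℕ),
      Multiset.count lam (eigs (interLap N G w)) = m ↔
        Multiset.count (2 * totalW N G w - lam) (eigs (interLap N G w)) = m :=
  interLap_sign_conjugation_and_spectrum_symmetry_general N G w
end

section
/- Let K_N be the complete graph on N ≥ 2 vertices. For every real weight function w on its edges, max{ 1 − λ_2(L_G(w)), 2W − 1 } ≥ (N−2)/N, and equality holds when every edge carries the weight 2/N². In other words, the optimal SLEM of the fastest discrete-time quantum consensus problem on the complete graph (case N ≤ d²) equals (N−2)/N, attained at uniform edge weight 2/N². -/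
/-!
The Laplacian kills the all-ones vector, so `0` is an eigenvalue; when `λ₂ > 0` it has to be
the smallest one, and then `2W = tr L ≥ (N - 1) λ₂`. Hence either `λ₂ ≤ 2/N`, or `λ₂ > 2/N`
and `2W - 1 ≥ (N - 2)/N`.

For the uniform weight `c` on `K_N`, `L = N c • 1 - c J` with `J² = N J`, so `L² = N c • L`
and every eigenvalue is `0` or `N c`. The trace `(N - 1) N c` exceeds `(N - 2) N c`, so only
one eigenvalue vanishes and `λ₂ = N c = 2/N`, while `2W - 1 = (N - 2)/N`.
-/

open Matrix Finset

attribute [local instance] Classical.propDecidable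

/-- The second smallest eigenvalue (with multiplicity) of a real symmetric matrix. -/
noncomputable def lambda2 {m : Type*} [Fintype m] [DecidableEq m] (M : Matrix m m ℝ) : ℝ :=
  ((eigs M).sort (· ≤ ·)).getD 1 0

open Polynomial in
theorem eq_zero_or_eq_of_mem_spectrum_of_mul_self_eq_smul {𝕜 A : Type*} [Field 𝕜] [Ring A]
    [Algebra 𝕜 A] [Nontrivial A] {a : A} {μ x : 𝕜} (ha : a * a = μ • a)
    (hx : x ∈ spectrum 𝕜 a) : x = 0 ∨ x = μ := by
  have hp : aeval a (X ^ 2 - C μ * X) = 0 := by simp [sq, ha, Algebra.smul_def]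
  have hmem := spectrum.subset_polynomial_aeval a (X ^ 2 - C μ * X) ⟨x, hx, rfl⟩
  rw [hp, spectrum.zero_eq, Set.mem_singleton_iff] at hmem
  simp only [eval_sub, eval_pow, eval_mul, eval_C, eval_X] at hmem
  rcases mul_eq_zero.mp (show x * (x - μ) = 0 by linear_combination hmem) with h | h
  · exact Or.inl h
  · exact Or.inr (sub_eq_zero.mp h)

section SecondSmallest
variable {s : Multiset ℝ}

theorem exists_sort_eq_cons_cons (hs : 2 ≤ Multiset.card s) :
    ∃ a b t, s.sort (· ≤ ·) = a :: b :: t ∧ a ≤ b ∧ (∀ x ∈ t, b ≤ x) ∧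
      s = (a :: b :: t : List ℝ) := by
  have hsorted := Multiset.pairwise_sort s (· ≤ ·)
  have hcoe : ((s.sort (· ≤ ·) : List ℝ) : Multiset ℝ) = s := Multiset.sort_eq s _
  have hlen := Multiset.length_sort (s := s) (· ≤ ·)
  match s.sort (· ≤ ·), hsorted, hcoe, hlen with
  | a :: b :: t, hsorted, hcoe, _ =>
    simp only [List.pairwise_cons, List.mem_cons, forall_eq_or_imp] at hsorted
    exact ⟨a, b, t, rfl, hsorted.1.1, hsorted.2.1, hcoe.symm⟩
  | [], _, _, hlen | [_], _, _, hlen => simp at hlen; omega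

theorem card_sub_one_mul_le_sum (hs : 2 ≤ Multiset.card s) (h0 : 0 ∈ s)
    (hpos : 0 < (s.sort (· ≤ ·)).getD 1 0) :
    ((Multiset.card s : ℝ) - 1) * (s.sort (· ≤ ·)).getD 1 0 ≤ s.sum := by
  obtain ⟨a, b, t, hsort, -, hbt, rfl⟩ := exists_sort_eq_cons_cons hs
  simp only [hsort, List.getD_cons_succ, List.getD_cons_zero] at hpos ⊢
  have ha : a = 0 := by
    simp only [Multiset.mem_coe, List.mem_cons] at h0
    rcases h0 with h | h | h
    · exact h.symm
    · linarith
    · linarith [hbt 0 h]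
  have ht := List.card_nsmul_le_sum t b hbt
  simp only [Multiset.coe_card, List.length_cons, Multiset.sum_coe, List.sum_cons,
    nsmul_eq_mul] at ht ⊢
  push_cast
  linarith

theorem le_getD_one_sort_of_forall_eq_zero_or_eq {μ : ℝ} (hs : 2 ≤ Multiset.card s)
    (hμ : 0 < μ) (hsμ : ∀ x ∈ s, x = 0 ∨ x = μ)
    (hsum : ((Multiset.card s : ℝ) - 2) * μ < s.sum) :
    μ ≤ (s.sort (· ≤ ·)).getD 1 0 := by
  obtain ⟨a, b, t, hsort, hab, -, rfl⟩ := exists_sort_eq_cons_cons hs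
  simp only [hsort, List.getD_cons_succ, List.getD_cons_zero]
  simp only [Multiset.mem_coe, List.mem_cons, forall_eq_or_imp] at hsμ
  obtain ⟨ha, hb | hb, ht⟩ := hsμ
  · exfalso
    have ha : a = 0 := by rcases ha with h | h <;> [exact h; linarith]
    have ht' := List.sum_le_card_nsmul t μ fun x hx => by rcases ht x hx with h | h <;> linarith
    simp only [Multiset.coe_card, List.length_cons, Multiset.sum_coe, List.sum_cons,
      nsmul_eq_mul] at ht' hsum
    push_cast at hsum
    linarith
  · exact hb.ge

end SecondSmallest

section Eigenvalues
variable {m : Type*} [Fintype m] [DecidableEq m] {M : Matrix m m ℝ}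

theorem eigs_eq_map_eigenvalues (hM : M.IsHermitian) :
    eigs M = Finset.univ.val.map hM.eigenvalues :=
  dif_pos hM

theorem card_eigs (hM : M.IsHermitian) : Multiset.card (eigs M) = Fintype.card m := by
  simp [eigs_eq_map_eigenvalues hM]

theorem sum_eigs (hM : M.IsHermitian) : (eigs M).sum = M.trace := by
  simp [eigs_eq_map_eigenvalues hM, hM.trace_eq_sum_eigenvalues]

theorem mem_eigs (hM : M.IsHermitian) {x : ℝ} : x ∈ eigs M ↔ x ∈ spectrum ℝ M := by
  simp [eigs_eq_map_eigenvalues hM, hM.spectrum_real_eq_range_eigenvalues]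

theorem card_sub_one_mul_lambda2_le_trace (hM : M.IsHermitian) (hm : 2 ≤ Fintype.card m)
    (hdet : M.det = 0) (hpos : 0 < lambda2 M) :
    ((Fintype.card m : ℝ) - 1) * lambda2 M ≤ M.trace := by
  have h0 : (0 : ℝ) ∈ eigs M := by
    rw [mem_eigs hM, spectrum.zero_mem_iff, Matrix.isUnit_iff_isUnit_det, hdet]
    exact not_isUnit_zero
  rw [← card_eigs hM, ← sum_eigs hM]
  exact card_sub_one_mul_le_sum (card_eigs hM ▸ hm) h0 hpos

theorem le_lambda2_of_mul_self_eq_smul (hM : M.IsHermitian) (hm : 2 ≤ Fintype.card m) {μ : ℝ}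
    (hμ : 0 < μ) (hsq : M * M = μ • M) (htr : ((Fintype.card m : ℝ) - 2) * μ < M.trace) :
    μ ≤ lambda2 M := by
  have : Nonempty m := Fintype.card_pos_iff.mp (by omega)
  rw [← card_eigs hM, ← sum_eigs hM] at htr
  refine le_getD_one_sort_of_forall_eq_zero_or_eq (card_eigs hM ▸ hm) hμ (fun x hx => ?_) htr
  exact eq_zero_or_eq_of_mem_spectrum_of_mul_self_eq_smul hsq ((mem_eigs hM).mp hx)

end Eigenvalues

section Laplacian
variable {N : ℕ} {G : SimpleGraph (Fin N)} {w : Fin N → Fin N → ℝ}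

theorem graphLap_isHermitian (hw : ∀ i j, w i j = w j i) : (graphLap N G w).IsHermitian := by
  ext i j
  by_cases h : i = j
  · simp [graphLap, h]
  · simp [graphLap, h, Ne.symm h, G.adj_comm, hw i j]

theorem graphLap_apply (i j : Fin N) :
    graphLap N G w i j = (if i = j then ∑ k, (if G.Adj i k then w i k else 0) else 0) -
      if G.Adj i j then w i j else 0 := by
  by_cases h : i = j
  · simp [graphLap, h]
  · by_cases hij : G.Adj i j <;> simp [graphLap, h, hij]

theorem graphLap_mulVec_one : graphLap N G w *ᵥ 1 = 0 := by
  ext i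
  simp [Matrix.mulVec, dotProduct, graphLap_apply, Finset.sum_sub_distrib]

theorem det_graphLap [NeZero N] : (graphLap N G w).det = 0 :=
  Matrix.exists_mulVec_eq_zero_iff.mp ⟨1, one_ne_zero, graphLap_mulVec_one⟩

theorem trace_graphLap (hw : ∀ i j, w i j = w j i) :
    (graphLap N G w).trace = 2 * totalW N G w := by
  have hsplit : ∀ i k, (if G.Adj i k then w i k else 0) =
      (if i < k ∧ G.Adj i k then w i k else 0) + (if k < i ∧ G.Adj k i then w k i else 0) := by
    intro i k
    rcases lt_trichotomy i k with h | rfl | h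
    · simp [h, h.not_gt]
    · simp
    · simp [h, h.not_gt, G.adj_comm, hw i k]
  have hdiag : ∀ i, graphLap N G w i i = ∑ k, if G.Adj i k then w i k else 0 := by
    simp [graphLap]
  simp only [Matrix.trace, Matrix.diag, hdiag, hsplit, Finset.sum_add_distrib]
  rw [Finset.sum_comm (f := fun i k => if k < i ∧ G.Adj k i then w k i else 0), totalW]
  ring

theorem card_sub_one_mul_lambda2_graphLap_le (hN : 2 ≤ N) (hw : ∀ i j, w i j = w j i)
    (hpos : 0 < lambda2 (graphLap N G w)) :
    ((N : ℝ) - 1) * lambda2 (graphLap N G w) ≤ 2 * totalW N G w := by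
  have : NeZero N := ⟨by omega⟩
  simpa [trace_graphLap hw] using
    card_sub_one_mul_lambda2_le_trace (graphLap_isHermitian hw) (by simpa using hN) det_graphLap
      hpos

end Laplacian

section Uniform
variable {N : ℕ} (c : ℝ)

theorem graphLap_top_const :
    graphLap N ⊤ (fun _ _ => c) = ((N : ℝ) * c) • 1 - Matrix.of fun _ _ => c := by
  ext i j
  by_cases h : i = j
  · subst h
    simp [graphLap, Finset.sum_ite, Finset.filter_ne, Nat.cast_sub i.pos]
    ring
  · simp [graphLap, h]

theorem graphLap_top_const_mul_self :
    graphLap N ⊤ (fun _ _ => c) * graphLap N ⊤ (fun _ _ => c) =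
      ((N : ℝ) * c) • graphLap N ⊤ (fun _ _ => c) := by
  have hC : ((Matrix.of fun _ _ => c) * Matrix.of fun _ _ => c : Matrix (Fin N) (Fin N) ℝ) =
      ((N : ℝ) * c) • Matrix.of fun _ _ => c := by
    ext i j
    simp [Matrix.mul_apply]
    ring
  rw [graphLap_top_const, sub_mul, mul_sub, mul_sub, hC]
  simp only [smul_mul_assoc, mul_smul_comm, one_mul, mul_one]
  module

theorem trace_graphLap_top_const :
    (graphLap N ⊤ (fun _ _ => c)).trace = (N : ℝ) * ((N : ℝ) * c) - N * c := by
  simp [graphLap_top_const, Matrix.trace]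

theorem two_mul_totalW_top_const :
    2 * totalW N ⊤ (fun _ _ => c) = (N : ℝ) * ((N : ℝ) * c) - N * c := by
  rw [← trace_graphLap fun _ _ => rfl, trace_graphLap_top_const]

theorem mul_le_lambda2_graphLap_top_const (hN : 2 ≤ N) (hc : 0 < c) :
    (N : ℝ) * c ≤ lambda2 (graphLap N ⊤ fun _ _ => c) := by
  have hNc : 0 < (N : ℝ) * c := mul_pos (by positivity) hc
  refine le_lambda2_of_mul_self_eq_smul (graphLap_isHermitian fun _ _ => rfl) (by simpa using hN)
    hNc (graphLap_top_const_mul_self c) ?_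
  rw [trace_graphLap_top_const, Fintype.card_fin]
  linarith

end Uniform

/-- Optimal SLEM of the FDTQC problem on the complete graph `K_N` (case `N ≤ d²`):
for every weight function, `max{1 − λ₂, 2W − 1} ≥ (N−2)/N`, with equality at the
uniform weight `2/N²`. -/
theorem complete_graph_optimal_slem (N : ℕ) (hN : 2 ≤ N) :
    (∀ w : Fin N → Fin N → ℝ, (∀ i j, w i j = w j i) →
      ((N : ℝ) - 2) / N ≤
        max (1 - lambda2 (graphLap N ⊤ w)) (2 * totalW N ⊤ w - 1)) ∧
    max (1 - lambda2 (graphLap N ⊤ (fun _ _ => 2 / (N : ℝ) ^ 2)))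
        (2 * totalW N ⊤ (fun _ _ => 2 / (N : ℝ) ^ 2) - 1) = ((N : ℝ) - 2) / N := by
  have hN2 : (2 : ℝ) ≤ N := by exact_mod_cast hN
  have hgap : ((N : ℝ) - 2) / N = 1 - 2 / N := by field_simp
  refine ⟨fun w hw => ?_, ?_⟩
  · rcases le_or_gt (lambda2 (graphLap N ⊤ w)) (2 / N) with hle | hlt
    · exact le_max_of_le_left (by linarith)
    · have hW := card_sub_one_mul_lambda2_graphLap_le hN hw
        ((by positivity : (0 : ℝ) < 2 / N).trans hlt)
      have hmono : ((N : ℝ) - 1) * (2 / N) ≤ ((N : ℝ) - 1) * lambda2 (graphLap N ⊤ w) := by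
        gcongr; linarith
      have hval : ((N : ℝ) - 1) * (2 / N) = 2 - 2 / N := by field_simp
      exact le_max_of_le_right (by linarith)
  · have hNc : (N : ℝ) * (2 / (N : ℝ) ^ 2) = 2 / N := by field_simp
    have hlambda2 := mul_le_lambda2_graphLap_top_const (2 / (N : ℝ) ^ 2) hN (by positivity)
    have hW : (N : ℝ) * (2 / N) - 2 / N - 1 = ((N : ℝ) - 2) / N := by field_simp; ring
    rw [two_mul_totalW_top_const, hNc, hW, max_eq_right]
    linarith
end
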